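/- For Sweedler's Hopf algebra H with triangular structure R_λ and infinitesimal R-matrix χ_α = α·(xg⊗x), the identity R_λ·χ_α = −χ_α^op·R_λ holds (where χ_α^op = α·(x⊗xg)). Consequently, if χ_α additionally satisfies R_λ·χ_α = χ_α^op·R_λ, then α = 0; i.e., the only Cartier structure on (H, R_λ) is χ = 0. -/

import Mathlib

open scoped TensorProduct

noncomputable section

variable (k H : Type*) [Field k] [Ring H] [Bialgebra k H]

/-- leg embedding `a ⊗ b ↦ a ⊗ b ⊗ 1` into `H ⊗ (H ⊗ H)`. -/
def leg12 : H ⊗[k] H →ₐ[k] H ⊗[k] (H ⊗[k] H) :=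
  Algebra.TensorProduct.map (AlgHom.id k H) Algebra.TensorProduct.includeLeft

/-- leg embedding `a ⊗ b ↦ 1 ⊗ a ⊗ b`. -/
def leg23 : H ⊗[k] H →ₐ[k] H ⊗[k] (H ⊗[k] H) :=
  Algebra.TensorProduct.includeRight

/-- leg embedding `a ⊗ b ↦ a ⊗ 1 ⊗ b`. -/
def leg13 : H ⊗[k] H →ₐ[k] H ⊗[k] (H ⊗[k] H) :=
  Algebra.TensorProduct.map (AlgHom.id k H) Algebra.TensorProduct.includeRight

/-- `(Id ⊗ Δ)` as an algebra map `H ⊗ H → H ⊗ (H ⊗ H)`. -/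
def idComul : H ⊗[k] H →ₐ[k] H ⊗[k] (H ⊗[k] H) :=
  Algebra.TensorProduct.map (AlgHom.id k H) (Bialgebra.comulAlgHom k H)

/-- `(Δ ⊗ Id)` as an algebra map `H ⊗ H → H ⊗ (H ⊗ H)` (after reassociation). -/
def comulId : H ⊗[k] H →ₐ[k] H ⊗[k] (H ⊗[k] H) :=
  (Algebra.TensorProduct.assoc k k k H H H).toAlgHom.comp
    (Algebra.TensorProduct.map (Bialgebra.comulAlgHom k H) (AlgHom.id k H))

/-- the flip `a ⊗ b ↦ b ⊗ a` as an algebra map. -/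
def swapT : H ⊗[k] H →ₐ[k] H ⊗[k] H := (Algebra.TensorProduct.comm k H H).toAlgHom

/-- A quasitriangular structure on the bialgebra `H`. -/
structure QT where
  R : H ⊗[k] H
  Rinv : H ⊗[k] H
  mul_inv : R * Rinv = 1
  inv_mul : Rinv * R = 1
  quasi_cocomm : ∀ h : H, swapT k H (Coalgebra.comul (R := k) h) * R = R * Coalgebra.comul (R := k) h
  hex1 : idComul k H R = leg13 k H R * leg12 k H R
  hex2 : comulId k H R = leg13 k H R * leg23 k H R

/-- A pre-Cartier quasitriangular bialgebra structure on `H`. -/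
structure PreCartier extends QT k H where
  χ : H ⊗[k] H
  chi_comm : ∀ h : H, χ * Coalgebra.comul (R := k) h = Coalgebra.comul (R := k) h * χ
  chi_hex1 : idComul k H χ = leg12 k H χ + leg12 k H Rinv * leg13 k H χ * leg12 k H R
  chi_hex2 : comulId k H χ = leg23 k H χ + leg23 k H Rinv * leg13 k H χ * leg23 k H R

/-!
With `ν = (1 - g)/2` one has `νx = ν(xg) = (x + xg)/2` and `xν = -(xg)ν = (x - xg)/2`, while every
`λ`-term of `R_λ` is killed by `xg ⊗ x` on the right and by `x ⊗ xg` on the left, since `x² = 0` and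
`xνx = 0`. Hence `R_λ (xg ⊗ x) = xg ⊗ x - ½ (x + xg) ⊗ (x + xg)` and
`(x ⊗ xg) R_λ = x ⊗ xg + ½ (x - xg) ⊗ (x - xg)`, which cancel by the polarization identity
`(a + b) ⊗ (a + b) - (a - b) ⊗ (a - b) = 2 (a ⊗ b + b ⊗ a)`. If moreover `R_λ χ_α = χ_αᵒᵖ R_λ`, then
`R_λ χ_α` equals its own negative and vanishes; but `R_λ (xg ⊗ x) ≠ 0`, because `x` and `xg` are
linearly independent and so are the four tensors built from them. Hence `α = 0`.
-/

theorem two_mul_inv_mul_inv {K : Type*} [Field K] : (2 : K) * (2⁻¹ * 2⁻¹) = 2⁻¹ := by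
  simpa [mul_assoc] using inv_mul_mul_self (2 : K)⁻¹

theorem LinearIndependent.tmul_pair {K V : Type*} [CommRing K] [IsDomain K] [AddCommGroup V]
    [Module K V] {u v : V} (huv : LinearIndependent K ![u, v]) :
    LinearIndependent K ![u ⊗ₜ[K] u, u ⊗ₜ[K] v, v ⊗ₜ[K] u, v ⊗ₜ[K] v] := by
  convert (huv.tmul_of_isDomain huv).comp ![(0, 0), (0, 1), (1, 0), (1, 1)] (by decide) using 1
  ext i
  fin_cases i <;> rfl

theorem TensorProduct.add_tmul_add_sub_sub_tmul_sub {R M : Type*} [CommRing R] [AddCommGroup M]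
    [Module R M] (u v : M) :
    (u + v) ⊗ₜ[R] (u + v) - (u - v) ⊗ₜ[R] (u - v) = (2 : R) • (u ⊗ₜ[R] v + v ⊗ₜ[R] u) := by
  simp only [TensorProduct.add_tmul, TensorProduct.tmul_add, TensorProduct.sub_tmul,
    TensorProduct.tmul_sub, two_smul]
  abel

namespace Sweedler

variable {K A : Type*} [Field K] [Ring A] [Algebra K A] {g x ν : A}

theorem g_mul_x (hxg : x * g = -(g * x)) : g * x = -(x * g) := by
  rw [hxg, neg_neg]

theorem x_mul_nu (hν : ν = (2 : K)⁻¹ • (1 - g)) : x * ν = (2 : K)⁻¹ • (x - x * g) := by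
  rw [hν, mul_smul_comm, mul_sub, mul_one]

theorem x_mul_g_mul_nu (hg : g * g = 1) (hν : ν = (2 : K)⁻¹ • (1 - g)) :
    x * g * ν = -((2 : K)⁻¹ • (x - x * g)) := by
  rw [x_mul_nu hν, mul_assoc, hg, mul_one, ← smul_neg, neg_sub]

theorem nu_mul_x (hxg : x * g = -(g * x)) (hν : ν = (2 : K)⁻¹ • (1 - g)) :
    ν * x = (2 : K)⁻¹ • (x + x * g) := by
  rw [hν, smul_mul_assoc, sub_mul, one_mul, g_mul_x hxg, sub_neg_eq_add]

theorem nu_mul_x_mul_g (hg : g * g = 1) (hxg : x * g = -(g * x))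
    (hν : ν = (2 : K)⁻¹ • (1 - g)) :
    ν * (x * g) = (2 : K)⁻¹ • (x + x * g) := by
  rw [← mul_assoc, nu_mul_x hxg hν, smul_mul_assoc, add_mul, mul_assoc, hg, mul_one, add_comm]

theorem x_mul_nu_mul_x (hx : x * x = 0) (hxg : x * g = -(g * x))
    (hν : ν = (2 : K)⁻¹ • (1 - g)) : x * ν * x = 0 := by
  rw [mul_assoc, nu_mul_x hxg hν, mul_smul_comm, mul_add, hx, ← mul_assoc, hx, zero_mul,
    add_zero, smul_zero]

variable (K) in
/-- `R_λ`, with `ν` standing for `(1 - g) / 2`. -/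
def rMatrix (l : K) (ν x : A) : A ⊗[K] A :=
  1 - (2 : K) • (ν ⊗ₜ[K] ν) +
    l • (x ⊗ₜ[K] x + (2 : K) • ((x * ν) ⊗ₜ[K] (x * ν)) - (2 : K) • (x ⊗ₜ[K] (x * ν)))

theorem rMatrix_mul_tmul (l : K) (hg : g * g = 1) (hx : x * x = 0) (hxg : x * g = -(g * x))
    (hν : ν = (2 : K)⁻¹ • (1 - g)) :
    rMatrix K l ν x * ((x * g) ⊗ₜ[K] x) =
      (x * g) ⊗ₜ[K] x - (2 : K)⁻¹ • ((x + x * g) ⊗ₜ[K] (x + x * g)) := by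
  have hl : (x ⊗ₜ[K] x + (2 : K) • ((x * ν) ⊗ₜ[K] (x * ν)) - (2 : K) • (x ⊗ₜ[K] (x * ν))) *
      ((x * g) ⊗ₜ[K] x) = 0 := by
    simp only [add_mul, sub_mul, smul_mul_assoc, Algebra.TensorProduct.tmul_mul_tmul, hx,
      x_mul_nu_mul_x hx hxg hν, TensorProduct.tmul_zero, smul_zero, add_zero, sub_zero]
  rw [rMatrix, add_mul, sub_mul, one_mul, smul_mul_assoc, smul_mul_assoc, hl, smul_zero, add_zero,
    Algebra.TensorProduct.tmul_mul_tmul, nu_mul_x_mul_g hg hxg hν, nu_mul_x hxg hν,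
    TensorProduct.smul_tmul_smul, smul_smul, two_mul_inv_mul_inv]

theorem tmul_mul_rMatrix (l : K) (hg : g * g = 1) (hx : x * x = 0)
    (hν : ν = (2 : K)⁻¹ • (1 - g)) :
    (x ⊗ₜ[K] (x * g)) * rMatrix K l ν x =
      x ⊗ₜ[K] (x * g) + (2 : K)⁻¹ • ((x - x * g) ⊗ₜ[K] (x - x * g)) := by
  have hl : (x ⊗ₜ[K] (x * g)) *
      (x ⊗ₜ[K] x + (2 : K) • ((x * ν) ⊗ₜ[K] (x * ν)) - (2 : K) • (x ⊗ₜ[K] (x * ν))) = 0 := by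
    simp only [mul_add, mul_sub, mul_smul_comm, Algebra.TensorProduct.tmul_mul_tmul, hx,
      ← mul_assoc, zero_mul, TensorProduct.zero_tmul, smul_zero, zero_add, sub_zero]
  rw [rMatrix, mul_add, mul_sub, mul_one, mul_smul_comm, mul_smul_comm, hl, smul_zero, add_zero,
    Algebra.TensorProduct.tmul_mul_tmul, x_mul_nu hν, x_mul_g_mul_nu hg hν, TensorProduct.tmul_neg,
    TensorProduct.smul_tmul_smul, smul_neg, smul_smul, two_mul_inv_mul_inv, sub_neg_eq_add]

theorem rMatrix_mul_tmul_add_tmul_mul_rMatrix (l : K) (h2 : (2 : K) ≠ 0) (hg : g * g = 1)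
    (hx : x * x = 0) (hxg : x * g = -(g * x)) (hν : ν = (2 : K)⁻¹ • (1 - g)) :
    rMatrix K l ν x * ((x * g) ⊗ₜ[K] x) + (x ⊗ₜ[K] (x * g)) * rMatrix K l ν x = 0 := by
  rw [rMatrix_mul_tmul l hg hx hxg hν, tmul_mul_rMatrix l hg hx hν]
  calc (x * g) ⊗ₜ[K] x - (2 : K)⁻¹ • ((x + x * g) ⊗ₜ[K] (x + x * g)) +
        (x ⊗ₜ[K] (x * g) + (2 : K)⁻¹ • ((x - x * g) ⊗ₜ[K] (x - x * g)))
      = (x * g) ⊗ₜ[K] x + x ⊗ₜ[K] (x * g) - (2 : K)⁻¹ •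
          ((x + x * g) ⊗ₜ[K] (x + x * g) - (x - x * g) ⊗ₜ[K] (x - x * g)) := by
        rw [smul_sub]; abel
    _ = 0 := by
        rw [TensorProduct.add_tmul_add_sub_sub_tmul_sub, smul_smul, inv_mul_cancel₀ h2, one_smul,
          add_comm, sub_self]

theorem rMatrix_mul_tmul_ne_zero (l : K) (hg : g * g = 1) (hx : x * x = 0)
    (hxg : x * g = -(g * x)) (hν : ν = (2 : K)⁻¹ • (1 - g))
    (hli : LinearIndependent K ![x, x * g]) :
    rMatrix K l ν x * ((x * g) ⊗ₜ[K] x) ≠ 0 := by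
  rw [rMatrix_mul_tmul l hg hx hxg hν]
  intro h
  have hcoeff := Fintype.linearIndependent_iff.1 hli.tmul_pair
    ![-(2 : K)⁻¹, -(2 : K)⁻¹, 1 - (2 : K)⁻¹, -(2 : K)⁻¹] (by
      rw [← h, Fin.sum_univ_four]
      simp only [Matrix.cons_val, TensorProduct.add_tmul, TensorProduct.tmul_add]
      module) 2
  have h21 : (2 : K) = 1 := by simpa [sub_eq_zero, eq_comm (a := (1 : K))] using hcoeff
  exact one_ne_zero (by linear_combination h21 : (1 : K) = 0)

end Sweedler

theorem sweedler_Cartier_only_trivial (h2 : (2 : k) ≠ 0)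
    (g x : H) (hg : g * g = 1) (hx : x * x = 0) (hxg : x * g = -(g * x))
    (hli : LinearIndependent k ![(1 : H), g, x, x * g])
    (l : k) (ν : H) (hν : ν = (2 : k)⁻¹ • ((1 : H) - g))
    (Rl : H ⊗[k] H)
    (hRl : Rl = 1 - (2 : k) • (ν ⊗ₜ[k] ν) +
      l • (x ⊗ₜ[k] x + (2 : k) • ((x * ν) ⊗ₜ[k] (x * ν)) - (2 : k) • (x ⊗ₜ[k] (x * ν))))
    (α : k) (χ : H ⊗[k] H) (hχ : χ = α • ((x * g) ⊗ₜ[k] x)) :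
    Rl * χ = -(swapT k H χ * Rl) ∧
      (Rl * χ = swapT k H χ * Rl → α = 0) := by
  replace hRl : Rl = Sweedler.rMatrix k l ν x := hRl
  have hswap : swapT k H χ = α • (x ⊗ₜ[k] (x * g)) := by
    rw [hχ, map_smul]
    rfl
  have anti : Rl * χ = -(swapT k H χ * Rl) := by
    rw [hswap, hχ, hRl, mul_smul_comm, smul_mul_assoc, ← smul_neg, ← eq_neg_iff_add_eq_zero.2
      (Sweedler.rMatrix_mul_tmul_add_tmul_mul_rMatrix l h2 hg hx hxg hν)]
  refine ⟨anti, fun hcomm => ?_⟩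
  have hzero : Rl * χ = 0 := by
    have hdouble : (2 : k) • (Rl * χ) = 0 := by
      rw [two_smul]
      nth_rewrite 1 [hcomm]
      rw [anti, add_neg_cancel]
    exact (smul_eq_zero.1 hdouble).resolve_left h2
  have hxxg : LinearIndependent k ![x, x * g] := by
    convert hli.comp ![2, 3] (by decide) using 1
    ext i
    fin_cases i <;> rfl
  rw [hχ, hRl, mul_smul_comm] at hzero
  exact (smul_eq_zero.1 hzero).resolve_right
    (Sweedler.rMatrix_mul_tmul_ne_zero l hg hx hxg hν hxxg)

end
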